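/- arXiv:1610.07691 — 2 statements merged into one kernel-verified Lean document; each statement's English description precedes it below -/
import Mathlib

section
/- Let h be a homeomorphism of a closed interval I = [y, x] fixing both endpoints, and suppose f is a homeomorphism of I fixing both endpoints that commutes with h and satisfies f(z) ∈ (h(z), x] for a point z ∈ (y, x). If additionally f^{n−1}(z) ∈ (h^i(z), x] for all 0 ≤ i ≤ n−1, then f^n(z) ∈ (h^{i+1}(z), x] for all 0 ≤ i ≤ n−1. -/
open Set Function

/-- Interval dynamics (inductive step of Claim 1 in Lemma 4.3): let `f, h` be
commuting orientation-preserving homeomorphisms of the interval `[y, x]` fixing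
both endpoints, with `f z ∈ (h z, x]` for a point `z ∈ (y, x)`. If
`f^{n-1}(z) ∈ (h^i(z), x]` for all `0 ≤ i ≤ n-1`, then
`f^n(z) ∈ (h^{i+1}(z), x]` for all `0 ≤ i ≤ n-1`. -/
theorem interval_dynamics_inductive_step {y x : ℝ} (hyx : y < x)
    (f h : ℝ → ℝ)
    (hfmono : StrictMonoOn f (Icc y x)) (hhmono : StrictMonoOn h (Icc y x))
    (hfmaps : BijOn f (Icc y x) (Icc y x)) (hhmaps : BijOn h (Icc y x) (Icc y x))
    (hfcont : ContinuousOn f (Icc y x)) (hhcont : ContinuousOn h (Icc y x))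
    (hfy : f y = y) (hfx : f x = x) (hhy : h y = y) (hhx : h x = x)
    (hcomm : ∀ t ∈ Icc y x, f (h t) = h (f t))
    (z : ℝ) (hz : z ∈ Ioo y x)
    (hfz : f z ∈ Ioc (h z) x)
    (n : ℕ) (hn : 2 ≤ n)
    (hind : ∀ i ≤ n - 1, f^[n - 1] z ∈ Ioc (h^[i] z) x) :
    ∀ i ≤ n - 1, f^[n] z ∈ Ioc (h^[i + 1] z) x := by
  intro i hi
  have hfm : MapsTo f (Icc y x) (Icc y x) := hfmaps.mapsTo
  have hhm : MapsTo h (Icc y x) (Icc y x) := hhmaps.mapsTo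
  have hzI : z ∈ Icc y x := Ioo_subset_Icc_self hz
  have hiterh : ∀ k, MapsTo (h^[k]) (Icc y x) (Icc y x) := fun k => hhm.iterate k
  have hiterf : ∀ k, MapsTo (f^[k]) (Icc y x) (Icc y x) := fun k => hfm.iterate k
  -- commutation of f with iterates of h
  have hcommk : ∀ k, ∀ t ∈ Icc y x, f (h^[k] t) = h^[k] (f t) := by
    intro k
    induction k with
    | zero => intro t _; simp
    | succ k ih =>
      intro t ht
      rw [Function.iterate_succ_apply', Function.iterate_succ_apply',
        hcomm _ (hiterh k ht), ih t ht]
  -- strict monotonicity of iterates of h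
  have hmonok : ∀ k, StrictMonoOn (h^[k]) (Icc y x) := by
    intro k
    induction k with
    | zero => intro a _ b _ hab; simpa using hab
    | succ k ih =>
      have : h^[k + 1] = h ∘ h^[k] := by
        funext t; exact Function.iterate_succ_apply' h k t
      rw [this]
      exact hhmono.comp ih (hiterh k)
  have hhzI : h z ∈ Icc y x := hhm hzI
  have hfzI : f z ∈ Icc y x := hfm hzI
  have hizI : h^[i] z ∈ Icc y x := hiterh i hzI
  have hfn1I : f^[n - 1] z ∈ Icc y x := hiterf (n - 1) hzI
  have hind_i := hind i hi
  -- h^[i+1] z = h^[i] (h z) < h^[i] (f z) = f (h^[i] z) < f (f^[n-1] z) = f^[n] z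
  have step1 : h^[i + 1] z < h^[i] (f z) := by
    rw [Function.iterate_succ_apply]
    exact hmonok i hhzI hfzI hfz.1
  have step2 : h^[i] (f z) = f (h^[i] z) := (hcommk i z hzI).symm
  have step3 : f (h^[i] z) < f (f^[n - 1] z) := hfmono hizI hfn1I hind_i.1
  have hfn : f^[n] z = f (f^[n - 1] z) := by
    conv_lhs => rw [show n = (n - 1) + 1 by omega]
    exact Function.iterate_succ_apply' f (n - 1) z
  constructor
  · rw [hfn]; calc h^[i + 1] z < h^[i] (f z) := step1
      _ = f (h^[i] z) := step2
      _ < f (f^[n - 1] z) := step3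
  · have : f^[n] z ∈ Icc y x := hiterf n hzI
    exact this.2
end

section
/- Let S be a set of 'subsurfaces' with a relation ⋔ (overlapping) and projections d_W(·,·) satisfying the Behrstock inequality: for overlapping X, Y and any marking μ, d_X(μ, ∂Y) ≥ 10 implies d_Y(μ, ∂X) ≤ 4. Fix markings μ, μ' and K ≥ 20, and let Ω be the set of W with d_W(μ, μ') ≥ K. For X, Y ∈ Ω with X ⋔ Y, the following are equivalent: (i) d_X(μ, ∂Y) ≥ 10; (ii) d_X(∂Y, μ') ≤ 4; (iii) d_Y(μ, ∂X) ≤ 4; (iv) d_Y(∂X, μ') ≥ 10, provided the projection distances satisfy the triangle inequality and diam bounds d_X(∂Y, ∂Y) ≤ 2. -/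
/-- Equivalence of the four conditions defining the partial order on
`Ω(K, μ, μ')` (Corollary 3.7 of Clay–Leininger–Mangahas), from an abstract
axiomatization of subsurface projections: `Sub` is a set of subsurfaces with a
symmetric overlap relation `O`, `∂` assigns boundary data, and for each
subsurface `W` a symmetric projection distance `d W` on points (markings and
multicurves) satisfies the triangle inequality, the diameter bound
`d X (∂Y) (∂Y) ≤ 2` for overlapping `X, Y`, and the Behrstock inequality. -/
theorem partial_order_conditions_equivalent {Sub P : Type*}
    (d : Sub → P → P → ℝ) (bd : Sub → P) (O : Sub → Sub → Prop)
    (hOsymm : ∀ X Y, O X Y → O Y X)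
    (hsymm : ∀ W (p q : P), d W p q = d W q p)
    (htri : ∀ W (p q r : P), d W p r ≤ d W p q + d W q r)
    (hdiam : ∀ X Y, O X Y → d X (bd Y) (bd Y) ≤ 2)
    (hBehrstock : ∀ X Y, O X Y → ∀ p : P, d X p (bd Y) ≥ 10 → d Y p (bd X) ≤ 4)
    (μ μ' : P) (K : ℝ) (hK : 20 ≤ K)
    (X Y : Sub) (hXY : O X Y)
    (hXΩ : d X μ μ' ≥ K) (hYΩ : d Y μ μ' ≥ K) :
    [d X μ (bd Y) ≥ 10, d X (bd Y) μ' ≤ 4,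
      d Y μ (bd X) ≤ 4, d Y (bd X) μ' ≥ 10].TFAE := by
  tfae_have 1 → 3
  · intro h
    exact hBehrstock X Y hXY μ h
  tfae_have 3 → 4
  · intro h
    have := htri Y μ (bd X) μ'
    have h2 : d Y (bd X) μ' = d Y (bd X) μ' := rfl
    linarith [hYΩ]
  tfae_have 4 → 2
  · intro h
    have hb := hBehrstock Y X (hOsymm X Y hXY) μ' (by rw [hsymm]; exact h)
    rw [hsymm]; exact hb
  tfae_have 2 → 1
  · intro h
    have := htri X μ (bd Y) μ'
    linarith [hXΩ]
  tfae_finish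
end
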